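/- arXiv:2402.16690 — 3 statements merged into one kernel-verified Lean document; each statement's English description precedes it below -/
import Mathlib

section
/- Let α ∈ (0,1), let N ≥ 1, and let μ₁,…,μ_N be Borel probability measures on ℝ, each with a finite first moment and a continuous, strictly increasing cumulative distribution function. Let ω₁,…,ω_N be positive reals with Σⱼ ωⱼ = 1 and let μ = Σⱼ ωⱼ • μⱼ be the mixture measure. Set q = VaR_α(μ) and αⱼ = μⱼ((q,∞)) for each j (so each αⱼ ∈ (0,1)). Then CVaR_α(μ) = (1/α) · Σⱼ ωⱼ · αⱼ · CVaR_{αⱼ}(μⱼ). -/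
/-!
Both sides are linear in the measure once one knows the identity
`β · CVaR_β(ν) = ∫_{(q,∞)} y dν(y)` for `β = ν((q,∞))`. It holds because the Rockafellar–Uryasev
objective `z + β⁻¹ ∫ (y - z)⁺ dν` is bounded below by `β⁻¹ ∫_{(q,∞)} y dν`, using
`(y - z)⁺ ≥ 1_{y > q} (y - z)`, with equality at `z = q`. Continuity of the mixture CDF gives
`μ((q,∞)) = α` for `q = VaR_α(μ)`, so `α · CVaR_α(μ) = ∫_{(q,∞)} y dμ = Σⱼ ωⱼ ∫_{(q,∞)} y dμⱼ
= Σⱼ ωⱼ αⱼ CVaR_{αⱼ}(μⱼ)`.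
-/

open MeasureTheory Set

/-- Value-at-risk of a Borel probability measure `μ` on `ℝ` at level `α`:
`VaR_α(μ) = sInf { z | μ((-∞, z]) ≥ 1 - α }`. -/
noncomputable def VaR (μ : Measure ℝ) (α : ℝ) : ℝ :=
  sInf {z : ℝ | 1 - α ≤ (μ (Iic z)).toReal}

/-- Conditional value-at-risk via the Rockafellar–Uryasev formula:
`CVaR_α(μ) = ⨅ z, z + (1/α) ∫ max(y - z, 0) dμ(y)`. -/
noncomputable def CVaR (μ : Measure ℝ) (α : ℝ) : ℝ :=
  ⨅ z : ℝ, z + (1 / α) * ∫ y, max (y - z) 0 ∂μ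

open Filter Topology

lemma integral_max_sub_zero_eq_setIntegral_Ioi (ν : Measure ℝ) (q : ℝ) :
    ∫ y, max (y - q) 0 ∂ν = ∫ y in Ioi q, (y - q) ∂ν := by
  rw [← integral_indicator measurableSet_Ioi]
  congr 1 with y
  by_cases hy : y ∈ Ioi q
  · rw [indicator_of_mem hy, max_eq_left (sub_nonneg.2 (le_of_lt hy))]
  · rw [indicator_of_notMem hy, max_eq_right (sub_nonpos.2 (not_lt.1 hy))]

section CVaR

variable {ν : Measure ℝ} [IsFiniteMeasure ν]

lemma integrable_max_sub_zero (hν : Integrable id ν) (z : ℝ) :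
    Integrable (fun y => max (y - z) 0) ν :=
  (hν.sub (integrable_const z)).pos_part

lemma setIntegral_Ioi_sub (hν : Integrable id ν) (q z : ℝ) :
    ∫ y in Ioi q, (y - z) ∂ν = ∫ y in Ioi q, y ∂ν - ν.real (Ioi q) * z := by
  rw [integral_sub (f := fun y => y) hν.integrableOn (integrable_const z), setIntegral_const,
    smul_eq_mul]

lemma setIntegral_Ioi_sub_le_integral_max_sub_zero (hν : Integrable id ν) (q z : ℝ) :
    ∫ y in Ioi q, (y - z) ∂ν ≤ ∫ y, max (y - z) 0 ∂ν := by
  rw [← integral_indicator measurableSet_Ioi]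
  refine integral_mono ((hν.sub (integrable_const z)).indicator measurableSet_Ioi)
    (integrable_max_sub_zero hν z) fun y => ?_
  by_cases hy : y ∈ Ioi q
  · simp only [indicator_of_mem hy, le_max_left]
  · simp only [indicator_of_notMem hy, le_max_right]

/-- The Rockafellar–Uryasev infimum at level `ν((q,∞))` is attained at `z = q`. -/
lemma CVaR_measureReal_Ioi (hν : Integrable id ν) {q : ℝ} (hq : 0 < ν.real (Ioi q)) :
    CVaR ν (ν.real (Ioi q)) = 1 / ν.real (Ioi q) * ∫ y in Ioi q, y ∂ν := by
  set β := ν.real (Ioi q)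
  have h_objective_ge : ∀ z, 1 / β * ∫ y in Ioi q, y ∂ν ≤ z + 1 / β * ∫ y, max (y - z) 0 ∂ν := by
    intro z
    have h := setIntegral_Ioi_sub_le_integral_max_sub_zero hν q z
    rw [setIntegral_Ioi_sub hν] at h
    calc 1 / β * ∫ y in Ioi q, y ∂ν = z + 1 / β * (∫ y in Ioi q, y ∂ν - β * z) := by
          field_simp; ring
      _ ≤ z + 1 / β * ∫ y, max (y - z) 0 ∂ν := by gcongr
  have h_objective_q : q + 1 / β * ∫ y, max (y - q) 0 ∂ν = 1 / β * ∫ y in Ioi q, y ∂ν := by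
    rw [integral_max_sub_zero_eq_setIntegral_Ioi ν, setIntegral_Ioi_sub hν]
    field_simp; ring
  refine le_antisymm ?_ (le_ciInf h_objective_ge)
  exact h_objective_q ▸ ciInf_le ⟨_, forall_mem_range.2 h_objective_ge⟩ q

lemma measureReal_Ioi_mul_CVaR (hν : Integrable id ν) (q : ℝ) :
    ν.real (Ioi q) * CVaR ν (ν.real (Ioi q)) = ∫ y in Ioi q, y ∂ν := by
  rcases (measureReal_nonneg : 0 ≤ ν.real (Ioi q)).eq_or_lt with hq | hq
  · -- `CVaR ν 0` is a junk value, but it is multiplied by `0`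
    have : ν.restrict (Ioi q) = 0 :=
      Measure.restrict_eq_zero.2 ((measureReal_eq_zero_iff).1 hq.symm)
    rw [← hq, this, integral_zero_measure, zero_mul]
  · rw [CVaR_measureReal_Ioi hν hq]
    field_simp

end CVaR

lemma measureReal_Iic_VaR {ν : Measure ℝ} [IsProbabilityMeasure ν]
    (hcont : Continuous fun z => ν.real (Iic z)) {α : ℝ} (hα : α ∈ Ioo (0 : ℝ) 1) :
    ν.real (Iic (VaR ν α)) = 1 - α := by
  set S := {z : ℝ | 1 - α ≤ ν.real (Iic z)}
  have hS : VaR ν α = sInf S := rfl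
  have h_bot : Tendsto (fun z => ν.real (Iic z)) atBot (𝓝 0) :=
    (ProbabilityTheory.tendsto_cdf_atBot ν).congr (ProbabilityTheory.cdf_eq_real ν)
  have h_top : Tendsto (fun z => ν.real (Iic z)) atTop (𝓝 1) :=
    (ProbabilityTheory.tendsto_cdf_atTop ν).congr (ProbabilityTheory.cdf_eq_real ν)
  obtain ⟨A, hA⟩ := eventually_atBot.1 (h_bot.eventually (gt_mem_nhds (sub_pos.2 hα.2)))
  have hS_bdd : BddBelow S :=
    ⟨A, fun z hz => le_of_lt (not_le.1 fun hzA => (hA z hzA).not_ge hz)⟩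
  have hS_ne : S.Nonempty :=
    (h_top.eventually (lt_mem_nhds (sub_lt_self 1 hα.1))).exists.imp fun _ => le_of_lt
  have hS_closed : IsClosed S := isClosed_le continuous_const hcont
  refine le_antisymm ?_ (hS ▸ hS_closed.csInf_mem hS_ne hS_bdd)
  have h_left : Iio (VaR ν α) ⊆ {z | ν.real (Iic z) ≤ 1 - α} := fun z hz =>
    show ν.real (Iic z) ≤ 1 - α from
      not_lt.1 fun hzS => hz.not_ge (csInf_le hS_bdd (le_of_lt hzS))
  exact (isClosed_le hcont continuous_const).closure_subset_iff.2 h_left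
    (closure_Iio (VaR ν α) ▸ self_mem_Iic)

lemma measureReal_Ioi_VaR {ν : Measure ℝ} [IsProbabilityMeasure ν]
    (hcont : Continuous fun z => ν.real (Iic z)) {α : ℝ} (hα : α ∈ Ioo (0 : ℝ) 1) :
    ν.real (Ioi (VaR ν α)) = α := by
  rw [← compl_Iic, probReal_compl_eq_one_sub measurableSet_Iic, measureReal_Iic_VaR hcont hα,
    sub_sub_cancel]

section Mixture

variable {ι : Type*} {s : Finset ι} {μ : ι → Measure ℝ} {ω : ι → ℝ}

lemma isProbabilityMeasure_sum_ofReal_smul [∀ j, IsProbabilityMeasure (μ j)]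
    (hω : ∀ j ∈ s, 0 ≤ ω j) (hsum : ∑ j ∈ s, ω j = 1) :
    IsProbabilityMeasure (∑ j ∈ s, ENNReal.ofReal (ω j) • μ j) := by
  constructor
  simp only [Measure.finsetSum_apply, Measure.smul_apply, measure_univ, smul_eq_mul, mul_one]
  rw [← ENNReal.ofReal_sum_of_nonneg hω, hsum, ENNReal.ofReal_one]

lemma measureReal_sum_ofReal_smul [∀ j, IsFiniteMeasure (μ j)] (hω : ∀ j ∈ s, 0 ≤ ω j)
    (t : Set ℝ) :
    (∑ j ∈ s, ENNReal.ofReal (ω j) • μ j).real t = ∑ j ∈ s, ω j * (μ j).real t := by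
  simp only [measureReal_def, Measure.finsetSum_apply, Measure.smul_apply, smul_eq_mul]
  rw [ENNReal.toReal_sum fun j _ => ENNReal.mul_ne_top ENNReal.ofReal_ne_top (measure_ne_top _ _)]
  exact Finset.sum_congr rfl fun j hj => by rw [ENNReal.toReal_mul, ENNReal.toReal_ofReal (hω j hj)]

lemma integral_sum_ofReal_smul {f : ℝ → ℝ} (hω : ∀ j ∈ s, 0 ≤ ω j)
    (hf : ∀ j ∈ s, Integrable f (μ j)) :
    ∫ y, f y ∂(∑ j ∈ s, ENNReal.ofReal (ω j) • μ j) = ∑ j ∈ s, ω j * ∫ y, f y ∂μ j := by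
  rw [integral_finsetSum_measure fun j hj => (hf j hj).smul_measure ENNReal.ofReal_ne_top]
  exact Finset.sum_congr rfl fun j hj => by
    rw [integral_smul_measure, ENNReal.toReal_ofReal (hω j hj), smul_eq_mul]

end Mixture

theorem cvar_mixture_general (α : ℝ) (hα : α ∈ Set.Ioo (0 : ℝ) 1)
    (N : ℕ)
    (μs : Fin N → Measure ℝ) [∀ j, IsProbabilityMeasure (μs j)]
    (hmom : ∀ j, Integrable id (μs j))
    (hcont : ∀ j, Continuous fun z => ((μs j) (Iic z)).toReal)
    (ω : Fin N → ℝ) (hω : ∀ j, 0 < ω j) (hsum : ∑ j, ω j = 1)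
    (μ : Measure ℝ) (hμ : μ = ∑ j, ENNReal.ofReal (ω j) • μs j)
    (q : ℝ) (hq : q = VaR μ α)
    (a : Fin N → ℝ) (ha : ∀ j, a j = ((μs j) (Ioi q)).toReal) :
    CVaR μ α = (1 / α) * ∑ j, ω j * a j * CVaR (μs j) (a j) := by
  have hω₀ : ∀ j ∈ Finset.univ, 0 ≤ ω j := fun j _ => (hω j).le
  have : IsProbabilityMeasure μ := hμ ▸ isProbabilityMeasure_sum_ofReal_smul hω₀ hsum
  have hμ_int : Integrable id μ :=
    hμ ▸ integrable_finsetSum_measure.2 fun j _ => (hmom j).smul_measure ENNReal.ofReal_ne_top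
  have hμ_cont : Continuous fun z => μ.real (Iic z) := by
    simp only [hμ, measureReal_sum_ofReal_smul hω₀]
    exact continuous_finsetSum _ fun j _ => continuous_const.mul (hcont j)
  have hμ_tail : μ.real (Ioi q) = α := hq ▸ measureReal_Ioi_VaR hμ_cont hα
  have h_tail_mix : ∫ y in Ioi q, y ∂μ = ∑ j, ω j * ∫ y in Ioi q, y ∂μs j := by
    simp only [← integral_indicator measurableSet_Ioi]
    exact hμ ▸ integral_sum_ofReal_smul hω₀ fun j _ => (hmom j).indicator measurableSet_Ioi
  calc CVaR μ α = 1 / α * (μ.real (Ioi q) * CVaR μ (μ.real (Ioi q))) := by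
        rw [hμ_tail]; field_simp [hα.1.ne']
    _ = 1 / α * ∑ j, ω j * a j * CVaR (μs j) (a j) := by
        simp only [measureReal_Ioi_mul_CVaR hμ_int, h_tail_mix, ha, mul_assoc, ← measureReal_def,
          measureReal_Ioi_mul_CVaR (hmom _)]

/-- CVaR of a mixture is the weighted combination of component CVaRs at the
tail-probability levels `αⱼ = μⱼ((q, ∞))`, `q = VaR_α(μ)`. -/
theorem cvar_mixture (α : ℝ) (hα : α ∈ Set.Ioo (0 : ℝ) 1)
    (N : ℕ) (hN : 1 ≤ N)
    (μs : Fin N → Measure ℝ) [∀ j, IsProbabilityMeasure (μs j)]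
    (hmom : ∀ j, Integrable id (μs j))
    (hcont : ∀ j, Continuous fun z => ((μs j) (Iic z)).toReal)
    (hmono : ∀ j, StrictMono fun z => ((μs j) (Iic z)).toReal)
    (ω : Fin N → ℝ) (hω : ∀ j, 0 < ω j) (hsum : ∑ j, ω j = 1)
    (μ : Measure ℝ) (hμ : μ = ∑ j, ENNReal.ofReal (ω j) • μs j)
    (q : ℝ) (hq : q = VaR μ α)
    (a : Fin N → ℝ) (ha : ∀ j, a j = ((μs j) (Ioi q)).toReal) :
    CVaR μ α = (1 / α) * ∑ j, ω j * a j * CVaR (μs j) (a j) :=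
  cvar_mixture_general α hα N μs hmom hcont ω hω hsum μ hμ q hq a ha
end

section
/- Let μ be a Borel probability measure on ℝ with a finite first moment and a continuous cumulative distribution function, and let α ∈ (0,1). Define Q : ℝ → ℝ by Q(z) = z + (1/α) · ∫ max(y - z, 0) dμ(y). Then Q attains its global minimum at q = VaR_α(μ); that is, Q(q) ≤ Q(z) for every z ∈ ℝ, and consequently CVaR_α(μ) = Q(q) = VaR_α(μ) + (1/α) · ∫ max(y - VaR_α(μ), 0) dμ(y). -/
/-! Pointwise, `-𝟙_{(q, ∞)}(y)` is a subgradient of `z ↦ (y - z)⁺` at `q`; integrating, the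
Rockafellar–Uryasev objective `Q` satisfies `Q z ≥ Q q + (z - q) (1 - μ(q, ∞) / α)`. So `Q` is
minimal at every `q` with `μ(q, ∞) = α`. A continuous CDF takes the value `1 - α` at the infimum
of `{z | 1 - α ≤ F z}`, so `q = VaR_α(μ)` is such a point. -/

open MeasureTheory Set

open ProbabilityTheory Filter

noncomputable def rockafellarUryasevObjective (μ : Measure ℝ) (α z : ℝ) : ℝ :=
  z + (1 / α) * ∫ y, max (y - z) 0 ∂μ

theorem CVaR_eq_iInf_rockafellarUryasevObjective (μ : Measure ℝ) (α : ℝ) :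
    CVaR μ α = ⨅ z, rockafellarUryasevObjective μ α z :=
  rfl

theorem Continuous.apply_csInf_setOf_le {β : Type*} [LinearOrder β] [TopologicalSpace β]
    [OrderClosedTopology β] {f : ℝ → β} (hf : Continuous f) {c : β}
    (hne : {z | c ≤ f z}.Nonempty) (hbdd : BddBelow {z | c ≤ f z}) :
    f (sInf {z | c ≤ f z}) = c := by
  set q := sInf {z | c ≤ f z}
  have hq_mem : c ≤ f q := (isClosed_le continuous_const hf).csInf_mem hne hbdd
  have hlt : ∀ t < q, f t < c := fun t ht =>
    not_le.mp fun hct => (csInf_le hbdd hct).not_gt ht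
  have hle : f q ≤ c :=
    le_of_tendsto ((hf.tendsto q).mono_left (nhdsWithin_le_nhds (s := Iio q)))
      (eventually_nhdsWithin_of_forall fun t ht => (hlt t ht).le)
  exact le_antisymm hle hq_mem

theorem cdf_VaR_of_continuous (μ : Measure ℝ) [IsProbabilityMeasure μ]
    (hcont : Continuous (cdf μ)) {α : ℝ} (hα : α ∈ Ioo (0 : ℝ) 1) :
    cdf μ (VaR μ α) = 1 - α := by
  have hVaR : VaR μ α = sInf {z | 1 - α ≤ cdf μ z} := by
    simp only [VaR, cdf_eq_real, measureReal_def]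
  have hne : {z | 1 - α ≤ cdf μ z}.Nonempty :=
    ((tendsto_cdf_atTop μ).eventually (eventually_ge_nhds (by linarith [hα.1]))).exists
  have hbdd : BddBelow {z | 1 - α ≤ cdf μ z} := by
    have hα' : (0 : ℝ) < 1 - α := by linarith [hα.2]
    obtain ⟨a, ha⟩ :=
      eventually_atBot.mp ((tendsto_cdf_atBot μ).eventually (eventually_lt_nhds hα'))
    refine ⟨a, fun z hz => le_of_not_gt fun hza => ?_⟩
    exact (ha z hza.le).not_ge hz
  rw [hVaR]
  exact hcont.apply_csInf_setOf_le hne hbdd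

theorem measureReal_Ioi_VaR_of_continuous (μ : Measure ℝ) [IsProbabilityMeasure μ]
    (hcont : Continuous (cdf μ)) {α : ℝ} (hα : α ∈ Ioo (0 : ℝ) 1) :
    μ.real (Ioi (VaR μ α)) = α := by
  rw [← compl_Iic, probReal_compl_eq_one_sub measurableSet_Iic, ← cdf_eq_real,
    cdf_VaR_of_continuous μ hcont hα, sub_sub_cancel]

theorem max_sub_zero_sub_indicator_Ioi_le (q z y : ℝ) :
    max (y - q) 0 - (Ioi q).indicator (fun _ => z - q) y ≤ max (y - z) 0 := by
  by_cases hy : y ∈ Ioi q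
  · rw [indicator_of_mem hy, max_eq_left (sub_nonneg.mpr (mem_Ioi.mp hy).le)]
    linarith [le_max_left (y - z) 0]
  · rw [indicator_of_notMem hy, max_eq_right (sub_nonpos.mpr (not_lt.mp hy))]
    simp

theorem integral_max_sub_zero_sub_le {μ : Measure ℝ} [IsFiniteMeasure μ] (hμ : Integrable id μ)
    (q z : ℝ) :
    ∫ y, max (y - q) 0 ∂μ - (z - q) * μ.real (Ioi q) ≤ ∫ y, max (y - z) 0 ∂μ := by
  have hint : ∀ a : ℝ, Integrable (fun y => max (y - a) 0) μ := fun a =>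
    (hμ.sub (integrable_const a)).pos_part
  have hind : Integrable ((Ioi q).indicator fun _ => z - q) μ :=
    (integrable_const (z - q)).indicator measurableSet_Ioi
  calc ∫ y, max (y - q) 0 ∂μ - (z - q) * μ.real (Ioi q)
      = ∫ y, (max (y - q) 0 - (Ioi q).indicator (fun _ => z - q) y) ∂μ := by
        rw [integral_sub (hint q) hind, integral_indicator_const _ measurableSet_Ioi, smul_eq_mul,
          mul_comm]
    _ ≤ ∫ y, max (y - z) 0 ∂μ :=
        integral_mono ((hint q).sub hind) (hint z) (max_sub_zero_sub_indicator_Ioi_le q z)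

theorem rockafellarUryasevObjective_le_of_measureReal_Ioi_eq {μ : Measure ℝ} [IsFiniteMeasure μ]
    (hμ : Integrable id μ) {α q : ℝ} (hα : 0 < α) (hq : μ.real (Ioi q) = α) (z : ℝ) :
    rockafellarUryasevObjective μ α q ≤ rockafellarUryasevObjective μ α z := by
  have key := integral_max_sub_zero_sub_le hμ q z
  rw [hq] at key
  have hscaled := mul_le_mul_of_nonneg_left key (one_div_nonneg.mpr hα.le)
  have hcancel : 1 / α * ((z - q) * α) = z - q := by field_simp
  rw [mul_sub, hcancel] at hscaled
  unfold rockafellarUryasevObjective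
  linarith

/-- The Rockafellar–Uryasev objective `Q` attains its global minimum at
`q = VaR_α(μ)`, so `CVaR_α(μ) = Q(q) = VaR_α(μ) + (1/α) ∫ max(y - VaR_α(μ), 0) dμ`. -/
theorem rockafellar_uryasev_minimizer (μ : Measure ℝ) [IsProbabilityMeasure μ]
    (hmom : Integrable id μ)
    (hcont : Continuous fun z => (μ (Iic z)).toReal)
    (α : ℝ) (hα : α ∈ Set.Ioo (0 : ℝ) 1)
    (Q : ℝ → ℝ) (hQ : ∀ z, Q z = z + (1 / α) * ∫ y, max (y - z) 0 ∂μ)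
    (q : ℝ) (hq : q = VaR μ α) :
    (∀ z : ℝ, Q q ≤ Q z) ∧
      CVaR μ α = VaR μ α + (1 / α) * ∫ y, max (y - VaR μ α) 0 ∂μ := by
  have hQ_eq : Q = rockafellarUryasevObjective μ α := funext hQ
  have hcdf : Continuous (cdf μ) := by
    convert hcont using 1
    ext z
    rw [cdf_eq_real, measureReal_def]
  have hmin : ∀ z, Q (VaR μ α) ≤ Q z := hQ_eq ▸
    rockafellarUryasevObjective_le_of_measureReal_Ioi_eq hmom hα.1
      (measureReal_Ioi_VaR_of_continuous μ hcdf hα)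
  subst hQ_eq hq
  refine ⟨hmin, ?_⟩
  rw [CVaR_eq_iInf_rockafellarUryasevObjective]
  exact ciInf_eq_of_forall_ge_of_forall_gt_exists_lt hmin fun _ hw => ⟨_, hw⟩
end

section
/- Let m ∈ ℝ, σ > 0, and α ∈ (0,1). Let Φ denote the cumulative distribution function and φ(x) = exp(−x²/2)/√(2π) the density of the standard real Gaussian. Let z* ∈ ℝ be the (unique) real number with Φ(z*) = 1 − α. Then ⨅ (z : ℝ), z + (1/α) · ∫ max(y − z, 0) d(gaussianReal m (σ²))(y) = m + σ · φ(z*) / α. That is, CVaR_α of the Gaussian distribution N(m, σ²) equals m + σ·φ(Φ⁻¹(1−α))/α. -/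
/-!
The Rockafellar–Uryasev objective `z ↦ z + α⁻¹ E(Y - z)⁺` is minimised at any `z₀` with
`P(Y > z₀) = α`: integrating the hinge inequality `(y - z)⁺ ≥ (y - z₀)⁺ + (z₀ - z) 1{y > z₀}`
gives `E(Y - z)⁺ ≥ E(Y - z₀)⁺ + (z₀ - z) α`. For `Y = m + σX` with `X` standard Gaussian we
take `z₀ = m + σ z*`, and `E(Y - z₀)⁺ = σ E(X - z*)⁺ = σ (φ(z*) - z* α)` because
`∫_{z*}^∞ x φ(x) dx = φ(z*)`, as `φ' = -x φ`.
-/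

open MeasureTheory ProbabilityTheory Set Filter Real Topology

section RockafellarUryasev

lemma posPart_sub_add_mul_indicator_le (y z z₀ : ℝ) :
    max (y - z₀) 0 + (z₀ - z) * (Ioi z₀).indicator 1 y ≤ max (y - z) 0 := by
  by_cases hy : z₀ < y
  · simp [indicator_of_mem (mem_Ioi.mpr hy), max_eq_left (sub_nonneg.mpr hy.le)]
  · simp [indicator_of_notMem (notMem_Ioi.mpr (not_lt.mp hy)), max_eq_right
      (sub_nonpos.mpr (not_lt.mp hy))]

variable {μ : Measure ℝ} [IsFiniteMeasure μ]

lemma integrable_posPart_sub (hμ : Integrable id μ) (z : ℝ) :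
    Integrable (fun y ↦ max (y - z) 0) μ :=
  (hμ.sub (integrable_const z)).sup (integrable_zero _ _ _)

lemma integral_posPart_sub_add_mul_measureReal_Ioi_le (hμ : Integrable id μ) (z₀ z : ℝ) :
    ∫ y, max (y - z₀) 0 ∂μ + (z₀ - z) * μ.real (Ioi z₀) ≤ ∫ y, max (y - z) 0 ∂μ := by
  have hind : Integrable ((Ioi z₀).indicator (1 : ℝ → ℝ)) μ :=
    (integrable_const 1).indicator measurableSet_Ioi
  calc ∫ y, max (y - z₀) 0 ∂μ + (z₀ - z) * μ.real (Ioi z₀)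
      = ∫ y, max (y - z₀) 0 + (z₀ - z) * (Ioi z₀).indicator 1 y ∂μ := by
        rw [integral_add (integrable_posPart_sub hμ z₀) (hind.const_mul _), integral_const_mul,
          integral_indicator_one measurableSet_Ioi]
    _ ≤ ∫ y, max (y - z) 0 ∂μ :=
        integral_mono ((integrable_posPart_sub hμ z₀).add (hind.const_mul _))
          (integrable_posPart_sub hμ z) fun y ↦ posPart_sub_add_mul_indicator_le y z z₀

lemma integral_posPart_sub_eq_setIntegral_Ioi (hμ : Integrable id μ) (t : ℝ) :
    ∫ x, max (x - t) 0 ∂μ = ∫ x in Ioi t, x ∂μ - t * μ.real (Ioi t) := by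
  have hpos : (fun x ↦ max (x - t) 0) = (Ioi t).indicator fun x ↦ x - t := by
    ext x
    by_cases hx : t < x
    · simp [indicator_of_mem (mem_Ioi.mpr hx), hx.le]
    · simp [hx, not_lt.mp hx]
  rw [hpos, integral_indicator measurableSet_Ioi, integral_sub (f := fun x ↦ x) hμ.integrableOn
    (integrable_const t).integrableOn, setIntegral_const, smul_eq_mul, mul_comm]

theorem ciInf_add_integral_posPart_sub_eq (hμ : Integrable id μ) {α z₀ : ℝ} (hα : 0 < α)
    (hz₀ : μ.real (Ioi z₀) = α) :
    ⨅ z : ℝ, z + (1 / α) * ∫ y, max (y - z) 0 ∂μ = z₀ + (1 / α) * ∫ y, max (y - z₀) 0 ∂μ := by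
  refine IsGLB.ciInf_eq (IsLeast.isGLB ⟨⟨z₀, rfl⟩, ?_⟩)
  rintro _ ⟨z, rfl⟩
  calc z₀ + 1 / α * ∫ y, max (y - z₀) 0 ∂μ
      = z + 1 / α * (∫ y, max (y - z₀) 0 ∂μ + (z₀ - z) * α) := by field_simp; ring
    _ ≤ z + 1 / α * ∫ y, max (y - z) 0 ∂μ := by
        gcongr
        exact hz₀ ▸ integral_posPart_sub_add_mul_measureReal_Ioi_le hμ z₀ z

end RockafellarUryasev

section Gaussian

lemma integrable_id_gaussianReal {m : ℝ} {v : NNReal} : Integrable id (gaussianReal m v) :=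
  memLp_one_iff_integrable.mp (memLp_id_gaussianReal 1)

lemma gaussianPDFReal_zero_one (x : ℝ) :
    gaussianPDFReal 0 1 x = exp (-(x ^ 2) / 2) / √(2 * π) := by
  simp [gaussianPDFReal, div_eq_inv_mul]

lemma hasDerivAt_gaussianPDFReal_zero_one (x : ℝ) :
    HasDerivAt (gaussianPDFReal 0 1) (-x * gaussianPDFReal 0 1 x) x := by
  rw [funext gaussianPDFReal_zero_one]
  have h : HasDerivAt (fun x : ℝ ↦ -(x ^ 2) / 2) (-x) x :=
    ((hasDerivAt_pow 2 x).neg.div_const 2).congr_deriv (by push_cast; ring)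
  exact (h.exp.div_const (√(2 * π))).congr_deriv (by ring)

lemma tendsto_gaussianPDFReal_zero_one_atTop :
    Tendsto (gaussianPDFReal 0 1) atTop (𝓝 0) := by
  rw [funext gaussianPDFReal_zero_one, ← zero_div (√(2 * π))]
  refine (tendsto_exp_atBot.comp ?_).div_const _
  exact (tendsto_neg_atTop_atBot.comp (tendsto_pow_atTop two_ne_zero)).atBot_div_const two_pos

lemma integrable_id_mul_gaussianPDFReal_zero_one :
    Integrable fun x ↦ x * gaussianPDFReal 0 1 x := by
  simp_rw [gaussianPDFReal_zero_one, ← mul_div_assoc]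
  convert (integrable_mul_exp_neg_mul_sq (one_half_pos (α := ℝ))).div_const (√(2 * π)) using 5
  ring

lemma setIntegral_Ioi_id_gaussianReal_zero_one (t : ℝ) :
    ∫ x in Ioi t, x ∂gaussianReal 0 1 = gaussianPDFReal 0 1 t := by
  rw [gaussianReal_of_var_ne_zero 0 one_ne_zero, setIntegral_withDensity_eq_setIntegral_toReal_smul
    (measurable_gaussianPDF 0 1) (ae_of_all _ fun _ ↦ gaussianPDF_lt_top) _ measurableSet_Ioi]
  simp only [toReal_gaussianPDF, smul_eq_mul, mul_comm (gaussianPDFReal 0 1 _)]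
  rw [integral_Ioi_of_hasDerivAt_of_tendsto' (f := fun x ↦ -gaussianPDFReal 0 1 x)
    (fun x _ ↦ (hasDerivAt_gaussianPDFReal_zero_one x).neg.congr_deriv (by rw [neg_mul, neg_neg]))
    integrable_id_mul_gaussianPDFReal_zero_one.integrableOn
    (by simpa using tendsto_gaussianPDFReal_zero_one_atTop.neg)]
  rw [zero_sub, neg_neg]

lemma integral_posPart_sub_gaussianReal_zero_one (t : ℝ) :
    ∫ x, max (x - t) 0 ∂gaussianReal 0 1
      = gaussianPDFReal 0 1 t - t * (gaussianReal 0 1).real (Ioi t) := by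
  rw [integral_posPart_sub_eq_setIntegral_Ioi integrable_id_gaussianReal,
    setIntegral_Ioi_id_gaussianReal_zero_one]

end Gaussian

section Affine

variable {ν : Measure ℝ} {σ : ℝ}

lemma measureReal_map_affine_Ioi (hσ : 0 < σ) (m t : ℝ) :
    (ν.map fun x ↦ σ * x + m).real (Ioi (σ * t + m)) = ν.real (Ioi t) := by
  rw [map_measureReal_apply (by fun_prop) measurableSet_Ioi]
  congr 1
  ext x
  simp [mul_lt_mul_iff_right₀ hσ]

lemma integral_posPart_sub_map_affine (hσ : 0 ≤ σ) (m t : ℝ) :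
    ∫ y, max (y - (σ * t + m)) 0 ∂ν.map (fun x ↦ σ * x + m)
      = σ * ∫ x, max (x - t) 0 ∂ν := by
  rw [integral_map (by fun_prop) (by fun_prop), ← integral_const_mul]
  congr 1
  ext x
  rw [mul_max_of_nonneg _ _ hσ, mul_zero]
  ring_nf

end Affine

lemma gaussianReal_zero_one_map_affine (m σ : ℝ) :
    (gaussianReal 0 1).map (fun x ↦ σ * x + m) = gaussianReal m ⟨σ ^ 2, sq_nonneg σ⟩ := by
  rw [show (fun x ↦ σ * x + m) = (· + m) ∘ (σ * ·) from rfl,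
    ← Measure.map_map (measurable_add_const m) (measurable_const_mul σ),
    gaussianReal_map_const_mul, gaussianReal_map_add_const]
  congr 1
  · simp
  · exact mul_one _

/-- Closed-form CVaR of a Gaussian `N(m, σ²)`:
`CVaR_α = m + σ · φ(Φ⁻¹(1 - α)) / α`, where `Φ` and `φ` are the CDF and the
density of the standard Gaussian, and CVaR is defined by the
Rockafellar–Uryasev formula. -/
theorem cvar_gaussian (m σ α : ℝ) (hσ : 0 < σ) (hα : α ∈ Set.Ioo (0 : ℝ) 1)
    (Phi : ℝ → ℝ) (hPhi : ∀ x, Phi x = ((gaussianReal 0 1) (Iic x)).toReal)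
    (phi : ℝ → ℝ)
    (hphi : ∀ x, phi x = Real.exp (-(x ^ 2) / 2) / Real.sqrt (2 * Real.pi))
    (zstar : ℝ) (hz : Phi zstar = 1 - α) :
    (⨅ z : ℝ, z + (1 / α) * ∫ y, max (y - z) 0
        ∂(gaussianReal m ⟨σ ^ 2, sq_nonneg σ⟩))
      = m + σ * phi zstar / α := by
  have htail : (gaussianReal 0 1).real (Ioi zstar) = α := by
    rw [← compl_Iic, probReal_compl_eq_one_sub measurableSet_Iic, measureReal_def, ← hPhi, hz]
    ring
  rw [← gaussianReal_zero_one_map_affine m σ,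
    ciInf_add_integral_posPart_sub_eq (z₀ := σ * zstar + m)
      (gaussianReal_zero_one_map_affine m σ ▸ integrable_id_gaussianReal) hα.1
      (by rw [measureReal_map_affine_Ioi hσ, htail]),
    integral_posPart_sub_map_affine hσ.le, integral_posPart_sub_gaussianReal_zero_one, htail,
    hphi, gaussianPDFReal_zero_one]
  field_simp [hα.1.ne']
  ring
end
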